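/- Let v = e_1 + e_2, let Δ(F_4) be the convex hull of R(F_4), let σ be the convex cone generated by Δ(F_4) − v, and let S be the 14-element set {−e_1, −e_2} ∪ {ε e_j − e_i : i ∈ {1,2}, j ∈ {3,4}, ε ∈ {1, −1}} ∪ {(−e_1 − e_2 + ε_3 e_3 + ε_4 e_4)/2 : ε_3, ε_4 ∈ {1, −1}}. If C is a finite subset of M(F_4) with 0 ∉ C and C ⊆ σ, such that for every root u ∈ R(F_4) the vector u − v can be written as a finite sum of elements of C with nonnegative integer coefficients, then S ⊆ C; in particular C has at least 14 elements. -/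

import Mathlib

noncomputable section

/-- The standard basis vector `e i` of `ℝ^4` (0-based: `b 0` is `e₁`, …, `b 3` is `e₄`). -/
def b (i : Fin 4) : Fin 4 → ℝ := Pi.single i 1

/-- The 48 roots of type `F₄`: `±e_i`, `±e_i ± e_j` (`i ≠ j`), and
`(±e₁ ± e₂ ± e₃ ± e₄)/2`. -/
def rootsF4 : Set (Fin 4 → ℝ) :=
  {v | ∃ (i : Fin 4) (ε : ℝ), (ε = 1 ∨ ε = -1) ∧ v = ε • b i} ∪
  {v | ∃ (i j : Fin 4) (ε δ : ℝ), i ≠ j ∧ (ε = 1 ∨ ε = -1) ∧ (δ = 1 ∨ δ = -1) ∧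
    v = ε • b i + δ • b j} ∪
  {v | ∃ ε : Fin 4 → ℝ, (∀ i, ε i = 1 ∨ ε i = -1) ∧ v = (1 / 2 : ℝ) • ∑ i, ε i • b i}

/-- The weight lattice of `F₄`: `ℤ⁴ + ℤ·(1/2, 1/2, 1/2, 1/2)`. -/
def MF4 : AddSubgroup (Fin 4 → ℝ) :=
  AddSubgroup.closure ({v | ∃ i : Fin 4, v = b i} ∪ {fun _ => (1 / 2 : ℝ)})

/-- The convex cone generated by a set `S`: all finite sums of nonnegative real multiples
of elements of `S`. -/
def coneGen {V : Type*} [AddCommMonoid V] [Module ℝ V] (S : Set V) : Set V :=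
  {x | ∃ (n : ℕ) (c : Fin n → ℝ) (f : Fin n → V),
    (∀ i, 0 ≤ c i) ∧ (∀ i, f i ∈ S) ∧ x = ∑ i, c i • f i}

/-- The vertex `v = e₁ + e₂`. -/
def vF4 : Fin 4 → ℝ := b 0 + b 1

/-- The cone `σ` generated by `Δ(F₄) - v`. -/
def sigmaF4 : Set (Fin 4 → ℝ) := coneGen ((fun x => x - vF4) '' convexHull ℝ rootsF4)

/-- The `14`-element set `S` of the statement:
`{-e₁, -e₂} ∪ {±e_j - e_i : i ∈ {1,2}, j ∈ {3,4}} ∪ {(-e₁ - e₂ ± e₃ ± e₄)/2}`. -/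
def SF4 : Set (Fin 4 → ℝ) :=
  {-b 0, -b 1} ∪
  {w | ∃ (i j : Fin 4) (ε : ℝ), (i = 0 ∨ i = 1) ∧ (j = 2 ∨ j = 3) ∧ (ε = 1 ∨ ε = -1) ∧
    w = ε • b j - b i} ∪
  {w | ∃ ε₃ ε₄ : ℝ, (ε₃ = 1 ∨ ε₃ = -1) ∧ (ε₄ = 1 ∨ ε₄ = -1) ∧
    w = (1 / 2 : ℝ) • (-b 0 - b 1 + ε₃ • b 2 + ε₄ • b 3)}


/-!
A linear functional `ℓ` with `ℓ u ≤ ℓ v` for every root `u` is nonpositive on `σ`. Applied to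
`x₁`, `x₂` and `x₁ + x₂ ± x₃`, `x₁ + x₂ ± x₄`, this shows that the height `x₁ + x₂` is negative on
`σ ∖ {0}`; on the lattice it is an integer, so every element of `C` has height `≤ -1`.
Each `s ∈ S` is `u - v` for a root `u` of height `1`, so it has height `-1`, and a decomposition
of `s` with nonnegative integer coefficients over `C` can only be the single term `s`, so `s ∈ C`.
-/

open Finset

theorem Finset.mem_of_eq_sum_natCast_smul {V : Type*} [AddCommGroup V] [Module ℝ V]
    (f : V →ₗ[ℝ] ℝ) {C : Finset V} (hC : ∀ x ∈ C, 1 ≤ f x) {w : V} (hw : f w = 1)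
    {a : V → ℕ} (ha : w = ∑ x ∈ C, (a x : ℝ) • x) : w ∈ C := by
  classical
  have hfw : ∑ x ∈ C, (a x : ℝ) * f x = 1 := by simpa [ha, map_sum] using hw
  have hsum : ∑ x ∈ C, a x ≤ 1 := by
    have : (∑ x ∈ C, a x : ℝ) ≤ ∑ x ∈ C, (a x : ℝ) * f x :=
      sum_le_sum fun x hx => le_mul_of_one_le_right (Nat.cast_nonneg _) (hC x hx)
    exact_mod_cast hfw ▸ this
  obtain ⟨x₀, hx₀, hax₀⟩ : ∃ x ∈ C, a x ≠ 0 := by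
    by_contra! h
    rw [sum_eq_zero fun x hx => by simp [h x hx]] at hfw
    exact zero_ne_one hfw
  have hothers : ∀ x ∈ C, x ≠ x₀ → a x = 0 := fun x hx hne => by
    have hpair : ({x, x₀} : Finset V) ⊆ C := by simp [insert_subset_iff, hx, hx₀]
    have := (sum_le_sum_of_subset hpair (f := a)).trans hsum
    rw [sum_pair hne] at this
    omega
  have ha₀ : a x₀ = 1 := by
    have := (single_le_sum (f := a) (fun _ _ => Nat.zero_le _) hx₀).trans hsum
    omega
  rw [ha, sum_eq_single_of_mem x₀ hx₀ fun x hx hne => by simp [hothers x hx hne], ha₀]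
  simpa using hx₀

theorem le_zero_of_mem_coneGen_image_sub_convexHull {V : Type*} [AddCommGroup V] [Module ℝ V]
    (ℓ : V →ₗ[ℝ] ℝ) {R : Set V} {v : V} (hR : ∀ u ∈ R, ℓ u ≤ ℓ v) {x : V}
    (hx : x ∈ coneGen ((· - v) '' convexHull ℝ R)) : ℓ x ≤ 0 := by
  obtain ⟨n, c, f, hc, hf, rfl⟩ := hx
  rw [map_sum]
  refine sum_nonpos fun i _ => ?_
  obtain ⟨p, hp, hpf⟩ := hf i
  rw [← hpf]
  have : ℓ p ≤ ℓ v := convexHull_min hR (convex_halfSpace_le ℓ.isLinear _) hp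
  rw [map_smul, map_sub, smul_eq_mul]
  exact mul_nonpos_of_nonneg_of_nonpos (hc i) (by linarith)

def heightF4 : (Fin 4 → ℝ) →ₗ[ℝ] ℝ :=
  LinearMap.proj (R := ℝ) (φ := fun _ => ℝ) 0 + LinearMap.proj 1

@[simp] theorem heightF4_apply (x : Fin 4 → ℝ) : heightF4 x = x 0 + x 1 := rfl

theorem exists_int_heightF4_eq {x : Fin 4 → ℝ} (hx : x ∈ MF4) : ∃ n : ℤ, heightF4 x = n := by
  suffices MF4 ≤ (Int.castAddHom ℝ).range.comap heightF4.toAddMonoidHom by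
    obtain ⟨n, hn⟩ := this hx
    exact ⟨n, hn.symm⟩
  refine (AddSubgroup.closure_le _).2 ?_
  rintro _ (⟨i, rfl⟩ | rfl)
  · fin_cases i
    exacts [⟨1, by simp [b]⟩, ⟨1, by simp [b]⟩, ⟨0, by simp [b]⟩, ⟨0, by simp [b]⟩]
  · exact ⟨1, by norm_num⟩

theorem sum_abs_smul_b_eq_one {ε : ℝ} (hε : ε = 1 ∨ ε = -1) (i : Fin 4) :
    ∑ k, |(ε • b i) k| = 1 := by
  rcases hε with rfl | rfl <;> simp [b, Pi.single_apply, abs_ite]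

theorem sum_abs_le_two_of_mem_rootsF4 {u : Fin 4 → ℝ} (hu : u ∈ rootsF4) :
    ∑ k, |u k| ≤ 2 := by
  obtain (⟨i, ε, hε, rfl⟩ | ⟨i, j, ε, δ, -, hε, hδ, rfl⟩) | ⟨ε, hε, rfl⟩ := hu
  · rw [sum_abs_smul_b_eq_one hε]; norm_num
  · calc ∑ k, |(ε • b i + δ • b j) k| ≤ ∑ k, (|(ε • b i) k| + |(δ • b j) k|) :=
          sum_le_sum fun k _ => abs_add_le _ _
      _ = 2 := by
          rw [sum_add_distrib, sum_abs_smul_b_eq_one hε, sum_abs_smul_b_eq_one hδ]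
          norm_num
  · have : ∀ k, |ε k| = 1 := fun k => by rcases hε k with h | h <;> simp [h]
    norm_num [Finset.sum_apply, b, Pi.single_apply, abs_mul, this]

theorem abs_le_one_of_mem_rootsF4 {u : Fin 4 → ℝ} (hu : u ∈ rootsF4) (k : Fin 4) :
    |u k| ≤ 1 := by
  obtain (⟨i, ε, hε, rfl⟩ | ⟨i, j, ε, δ, hij, hε, hδ, rfl⟩) | ⟨ε, hε, rfl⟩ := hu
  · rcases hε with rfl | rfl <;> simp [b, Pi.single_apply, abs_ite, ite_le_one]
  · by_cases hi : k = i
    · subst hi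
      rcases hε with rfl | rfl <;> simp [b, Ne.symm hij]
    · rcases hδ with rfl | rfl <;> simp [b, Pi.single_apply, hi, abs_ite, ite_le_one]
  · rcases hε k with h | h <;> norm_num [Finset.sum_apply, b, Pi.single_apply, h]

theorem apply_nonpos_of_mem_sigmaF4 {x : Fin 4 → ℝ} (hx : x ∈ sigmaF4) {i : Fin 4}
    (hi : i = 0 ∨ i = 1) : x i ≤ 0 := by
  refine le_zero_of_mem_coneGen_image_sub_convexHull (LinearMap.proj i) (fun u hu => ?_) hx
  have hv : vF4 i = 1 := by rcases hi with rfl | rfl <;> simp [vF4, b]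
  simp only [LinearMap.coe_proj, Function.eval, hv]
  exact (le_abs_self _).trans (abs_le_one_of_mem_rootsF4 hu i)

theorem abs_apply_le_neg_heightF4_of_mem_sigmaF4 {x : Fin 4 → ℝ} (hx : x ∈ sigmaF4)
    {j : Fin 4} (hj : j = 2 ∨ j = 3) : |x j| ≤ -heightF4 x := by
  have key (ε : ℝ) (hε : |ε| ≤ 1) : heightF4 x + ε * x j ≤ 0 := by
    refine le_zero_of_mem_coneGen_image_sub_convexHull (heightF4 + ε • LinearMap.proj j)
      (fun u hu => ?_) hx
    have hεu : ε * u j ≤ |u j| :=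
      (le_abs_self _).trans (by rw [abs_mul]; exact mul_le_of_le_one_left (abs_nonneg _) hε)
    have hsum := sum_abs_le_two_of_mem_rootsF4 hu
    rcases hj with rfl | rfl <;>
    · simp only [Fin.sum_univ_four] at hsum
      simp only [LinearMap.add_apply, LinearMap.smul_apply, LinearMap.coe_proj, Function.eval,
        heightF4_apply, smul_eq_mul, vF4, b, Pi.add_apply, Pi.single_eq_same, ne_eq,
        Pi.single_eq_of_ne, Fin.reduceEq, not_false_eq_true, add_zero, zero_add, mul_zero]
      linarith [le_abs_self (u 0), le_abs_self (u 1), abs_nonneg (u 2), abs_nonneg (u 3)]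
  rw [abs_le]
  constructor <;> linarith [key 1 (by simp), key (-1) (by simp)]

theorem heightF4_le_neg_one {x : Fin 4 → ℝ} (hσ : x ∈ sigmaF4) (hM : x ∈ MF4) (hx : x ≠ 0) :
    heightF4 x ≤ -1 := by
  have h0 := apply_nonpos_of_mem_sigmaF4 hσ (Or.inl rfl)
  have h1 := apply_nonpos_of_mem_sigmaF4 hσ (Or.inr rfl)
  have h2 := abs_apply_le_neg_heightF4_of_mem_sigmaF4 hσ (Or.inl rfl)
  have h3 := abs_apply_le_neg_heightF4_of_mem_sigmaF4 hσ (Or.inr rfl)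
  have hle : heightF4 x ≤ 0 := by rw [heightF4_apply]; linarith
  have hne : heightF4 x ≠ 0 := fun hzero => hx <| by
    rw [hzero, neg_zero, abs_nonpos_iff] at h2 h3
    rw [heightF4_apply] at hzero
    ext k
    fin_cases k
    exacts [by show x 0 = 0; linarith, by show x 1 = 0; linarith, h2, h3]
  obtain ⟨n, hn⟩ := exists_int_heightF4_eq hM
  rw [hn] at hle hne ⊢
  have : n ≤ 0 := by exact_mod_cast hle
  have : n ≠ 0 := by exact_mod_cast hne
  exact_mod_cast (by omega : n ≤ -1)

theorem add_vF4_mem_rootsF4_of_mem_SF4 {s : Fin 4 → ℝ} (hs : s ∈ SF4) :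
    s + vF4 ∈ rootsF4 ∧ heightF4 s = -1 := by
  obtain ((rfl | rfl) | ⟨i, j, ε, hi, hj, hε, rfl⟩) | ⟨ε₃, ε₄, h₃, h₄, rfl⟩ := hs
  · exact ⟨Or.inl (Or.inl ⟨1, 1, Or.inl rfl, by rw [vF4]; module⟩), by simp [b]⟩
  · exact ⟨Or.inl (Or.inl ⟨0, 1, Or.inl rfl, by rw [vF4]; module⟩), by simp [b]⟩
  · rcases hi with rfl | rfl
    · refine ⟨Or.inl (Or.inr ⟨1, j, 1, ε, ?_, Or.inl rfl, hε, by rw [vF4]; module⟩), ?_⟩ <;>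
        rcases hj with rfl | rfl <;> simp [b]
    · refine ⟨Or.inl (Or.inr ⟨0, j, 1, ε, ?_, Or.inl rfl, hε, by rw [vF4]; module⟩), ?_⟩ <;>
        rcases hj with rfl | rfl <;> simp [b]
  · refine ⟨Or.inr ⟨![1, 1, ε₃, ε₄], fun k => ?_, ?_⟩, ?_⟩
    · fin_cases k <;> simp [h₃, h₄]
    · simp only [Fin.sum_univ_four, vF4, Matrix.cons_val_zero, Matrix.cons_val_one,
        Matrix.cons_val, one_smul]
      module
    · norm_num [b, Pi.single_apply, Fin.ext_iff]

-- Integer entries make injectivity decidable.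
def twiceSF4 : Fin 14 → Fin 4 → ℤ :=
  ![![-2, 0, 0, 0], ![0, -2, 0, 0],
    ![-2, 0, 2, 0], ![-2, 0, -2, 0], ![-2, 0, 0, 2], ![-2, 0, 0, -2],
    ![0, -2, 2, 0], ![0, -2, -2, 0], ![0, -2, 0, 2], ![0, -2, 0, -2],
    ![-1, -1, 1, 1], ![-1, -1, 1, -1], ![-1, -1, -1, 1], ![-1, -1, -1, -1]]

theorem half_twiceSF4_mem_SF4 (k : Fin 14) : (fun i => (twiceSF4 k i : ℝ) / 2) ∈ SF4 := by
  fin_cases k <;>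
    simp [SF4, twiceSF4, b, funext_iff, Fin.forall_fin_succ, Pi.single_apply, or_and_right,
      exists_or] <;>
    norm_num

theorem fourteen_le_encard_SF4 : 14 ≤ SF4.encard := by
  have hinj : Function.Injective fun k i => (twiceSF4 k i : ℝ) / 2 := by
    intro k l hkl
    have htwice : Function.Injective twiceSF4 := by decide
    exact htwice (funext fun i => by simpa using congrFun hkl i)
  calc (14 : ℕ∞) = (Set.range fun k i => (twiceSF4 k i : ℝ) / 2).encard := by
        rw [← Set.image_univ, hinj.injOn.encard_image]; simp
    _ ≤ SF4.encard := Set.encard_le_encard (Set.range_subset_iff.2 half_twiceSF4_mem_SF4)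

theorem stmt5 (C : Finset (Fin 4 → ℝ))
    (hCM : ∀ x ∈ C, x ∈ MF4)
    (h0 : (0 : Fin 4 → ℝ) ∉ C)
    (hCσ : ∀ x ∈ C, x ∈ sigmaF4)
    (hgen : ∀ u ∈ rootsF4, ∃ a : (Fin 4 → ℝ) → ℕ,
      u - vF4 = ∑ x ∈ C, (a x : ℝ) • x) :
    SF4 ⊆ ↑C ∧ 14 ≤ C.card := by
  have hC : ∀ x ∈ C, 1 ≤ (-heightF4) x := fun x hx => by
    have := heightF4_le_neg_one (hCσ x hx) (hCM x hx) (ne_of_mem_of_not_mem hx h0)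
    simp only [LinearMap.neg_apply]
    linarith
  have hsub : SF4 ⊆ C := fun s hs => by
    obtain ⟨hroot, hheight⟩ := add_vF4_mem_rootsF4_of_mem_SF4 hs
    obtain ⟨a, ha⟩ := hgen _ hroot
    rw [add_sub_cancel_right] at ha
    exact Finset.mem_of_eq_sum_natCast_smul _ hC (by simp [hheight]) ha
  refine ⟨hsub, ?_⟩
  exact_mod_cast fourteen_le_encard_SF4.trans (Set.encard_le_encard hsub)
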